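/- Consider the quarter-plane kernel $K(\alpha,\beta) = \tfrac{1}{3}\alpha^2\beta^2 + \tfrac13 \beta^2 + \tfrac13\alpha^2 - \alpha\beta$ associated with the singular walk with steps $(1,1), (-1,1), (1,-1)$ each of probability $1/3$. Define $\rho = \tfrac{1+\sqrt5}{2}$ and, for $m \in \mathbb{Z}$, $\alpha_m = \frac{\sqrt5}{\rho^{4m-1} + \rho^{-4m+1}}$ and $\beta_m = \frac{\sqrt5}{\rho^{4m+1} + \rho^{-4m-1}}$. Then $K(\alpha_m, \beta_m) = 0$ and $K(\alpha_{m+1}, \beta_m) = 0$ for every $m \in \mathbb{Z}$. -/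

import Mathlib

/-!
Write `c k = ρ ^ k + ρ ^ (-k)`, so that `αₘ = √5 / c (4m - 1)` and `βₘ = √5 / c (4m + 1)`; both
zeros of the kernel are of the form `(√5 / c x, √5 / c (x + 2))`. Clearing denominators, such a
pair is a zero of `K` exactly when `5 + c x ^ 2 + c (x + 2) ^ 2 = 3 c x c (x + 2)`. With
`u = ρ ^ x` and `q = ρ ^ 2` this is an identity in `u` that holds as soon as `q + q⁻¹ = 3`, and
`q² - 3q + 1 = 0` follows from `ρ² = ρ + 1`.
-/

open Real goldenRatio

lemma goldenRatio_sq_sq_add_one : (φ ^ 2) ^ 2 + 1 = 3 * φ ^ 2 := by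
  linear_combination (φ ^ 2 + φ - 1) * goldenRatio_sq

lemma markov_of_sq_add_one_eq {K : Type*} [Field K] {q u : K} (hq : q ^ 2 + 1 = 3 * q)
    (hq0 : q ≠ 0) (hu : u ≠ 0) :
    5 + (u + u⁻¹) ^ 2 + (u * q + (u * q)⁻¹) ^ 2 = 3 * (u + u⁻¹) * (u * q + (u * q)⁻¹) := by
  field_simp
  linear_combination (u ^ 4 * q ^ 2 - 3 * u ^ 2 * q + 1) * hq

lemma kernel_eq_zero_of_markov {s c d : ℝ} (hs : s ^ 2 = 5) (hc : c ≠ 0) (hd : d ≠ 0)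
    (h : 5 + c ^ 2 + d ^ 2 = 3 * c * d) :
    (1 / 3) * (s / c) ^ 2 * (s / d) ^ 2 + (1 / 3) * (s / d) ^ 2 + (1 / 3) * (s / c) ^ 2
      - (s / c) * (s / d) = 0 := by
  field_simp
  linear_combination s ^ 2 * h + s ^ 2 * hs

lemma kernel_goldenRatio_zpow_eq_zero (x : ℤ) :
    let a := √5 / (φ ^ x + φ ^ (-x))
    let b := √5 / (φ ^ (x + 2) + φ ^ (-(x + 2)))
    (1 / 3) * a ^ 2 * b ^ 2 + (1 / 3) * b ^ 2 + (1 / 3) * a ^ 2 - a * b = 0 := by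
  have hpow : ∀ k : ℤ, 0 < φ ^ k + φ ^ (-k) := fun k => by
    have := goldenRatio_pos
    positivity
  have hshift : φ ^ (x + 2) = φ ^ x * φ ^ 2 := by
    rw [zpow_add₀ goldenRatio_ne_zero, zpow_two, sq]
  refine kernel_eq_zero_of_markov (sq_sqrt (by norm_num)) (hpow x).ne' (hpow (x + 2)).ne' ?_
  rw [zpow_neg, zpow_neg, hshift]
  exact markov_of_sq_add_one_eq goldenRatio_sq_sq_add_one (pow_ne_zero 2 goldenRatio_ne_zero)
    (zpow_ne_zero x goldenRatio_ne_zero)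

/-- For the singular walk with steps `(1,1), (-1,1), (1,-1)` each of probability `1/3`,
the Fibonacci-type points `(αₘ, βₘ)` built from the golden ratio `ρ = (1+√5)/2` lie on
the zero set of the kernel `K(α,β) = (1/3)(α²β² + α² + β²) - αβ`, and so do the shifted
pairs `(α_{m+1}, βₘ)`. -/
theorem stmt_15 (ρ : ℝ) (hρ : ρ = (1 + Real.sqrt 5) / 2)
    (α β : ℤ → ℝ)
    (hα : ∀ m : ℤ, α m = Real.sqrt 5 / (ρ ^ (4 * m - 1) + ρ ^ (-(4 * m - 1))))
    (hβ : ∀ m : ℤ, β m = Real.sqrt 5 / (ρ ^ (4 * m + 1) + ρ ^ (-(4 * m + 1))))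
    (K : ℝ → ℝ → ℝ)
    (hK : ∀ a b : ℝ, K a b = (1 / 3) * a ^ 2 * b ^ 2 + (1 / 3) * b ^ 2 + (1 / 3) * a ^ 2 - a * b) :
    ∀ m : ℤ, K (α m) (β m) = 0 ∧ K (α (m + 1)) (β m) = 0 := by
  subst hρ
  intro m
  constructor
  · have h := kernel_goldenRatio_zpow_eq_zero (4 * m - 1)
    rw [show 4 * m - 1 + 2 = 4 * m + 1 by ring] at h
    rw [hK, hα, hβ]
    exact h
  · have h := kernel_goldenRatio_zpow_eq_zero (4 * m + 1)
    rw [show 4 * m + 1 + 2 = 4 * (m + 1) - 1 by ring] at h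
    rw [hK, hα, hβ]
    linear_combination h
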